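/- Let a₁,…,aₙ be positive reals and w₁,…,wₙ nonnegative weights with Σᵢ wᵢ = 1, and let M(a₁,…,aₙ; w₁,…,wₙ) be the informational mean, i.e. the Fisher information ∫_ℝ (p'(x))²/p(x) dx of the mixture density p(x) = Σᵢ wᵢ φ_{σᵢ}(x) with σᵢ² = 1/aᵢ. Then the informational mean lies between the weighted harmonic and arithmetic means: (Σᵢ wᵢ/aᵢ)^{-1} ≤ M(a₁,…,aₙ; w₁,…,wₙ) ≤ Σᵢ wᵢ aᵢ. -/

import Mathlib

open MeasureTheory Real

/-- The centered Gaussian density with scale `σ`: `φ_σ(x) = (2πσ²)^{-1/2} exp(−x²/(2σ²))`. -/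
noncomputable def gaussianDensity (σ : ℝ) (x : ℝ) : ℝ :=
  (2 * π * σ ^ 2) ^ (-(1 : ℝ) / 2) * Real.exp (-x ^ 2 / (2 * σ ^ 2))

/-- The informational mean of positive reals `a₁,…,aₙ` with weights `w₁,…,wₙ`: the Fisher
information of the Gaussian scale mixture `p(x) = Σᵢ wᵢ φ_{σᵢ}(x)` with `σᵢ² = 1/aᵢ`. -/
noncomputable def informationalMean (n : ℕ) (w a : Fin n → ℝ) : ℝ :=
  ∫ x : ℝ, (deriv (fun y => ∑ i, w i * gaussianDensity (Real.sqrt (1 / a i)) y) x) ^ 2 /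
    (∑ i, w i * gaussianDensity (Real.sqrt (1 / a i)) x)

/-!
Write `φᵢ` for the component densities, so that `p' = -x ∑ᵢ wᵢ aᵢ φᵢ`. For the upper bound,
Cauchy–Schwarz over the components gives `(∑ᵢ wᵢ aᵢ φᵢ)² ≤ p · ∑ᵢ wᵢ aᵢ² φᵢ` pointwise, so
`p'² / p ≤ x² ∑ᵢ wᵢ aᵢ² φᵢ`, whose integral is `∑ᵢ wᵢ aᵢ` since `∫ x² φᵢ = 1 / aᵢ`. The lower bound
is the Cramér–Rao inequality `(∫ x p')² ≤ (∫ x² p) (∫ p'² / p)`, in which `∫ x p' = -1` and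
`∫ x² p = ∑ᵢ wᵢ / aᵢ`.
-/
open ProbabilityTheory
open scoped NNReal

section WeightedCauchySchwarz

variable {α : Type*} [MeasurableSpace α] {μ : Measure α} {f g p : α → ℝ}

lemma sq_integral_mul_le_integral_sq_mul_mul_integral_sq_div (hp : ∀ x, 0 < p x)
    (hfp : Integrable (fun x ↦ f x ^ 2 * p x) μ) (hfg : Integrable (fun x ↦ f x * g x) μ)
    (hgp : Integrable (fun x ↦ g x ^ 2 / p x) μ) :
    (∫ x, f x * g x ∂μ) ^ 2 ≤ (∫ x, f x ^ 2 * p x ∂μ) * ∫ x, g x ^ 2 / p x ∂μ := by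
  have hquad : ∀ t : ℝ, 0 ≤ (∫ x, f x ^ 2 * p x ∂μ) * (t * t) + 2 * (∫ x, f x * g x ∂μ) * t
      + ∫ x, g x ^ 2 / p x ∂μ := by
    intro t
    have hsq : ∀ x, t ^ 2 * (f x ^ 2 * p x) + 2 * t * (f x * g x) + g x ^ 2 / p x
        = (t * f x * p x + g x) ^ 2 / p x := fun x ↦ by
      field_simp [(hp x).ne']
      ring
    calc 0 ≤ ∫ x, (t * f x * p x + g x) ^ 2 / p x ∂μ :=
          integral_nonneg fun x ↦ div_nonneg (sq_nonneg _) (hp x).le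
      _ = ∫ x, t ^ 2 * (f x ^ 2 * p x) + 2 * t * (f x * g x) + g x ^ 2 / p x ∂μ := by
          simp only [hsq]
      _ = _ := by
          rw [integral_add ((hfp.const_mul _).fun_add (hfg.const_mul _)) hgp,
            integral_add (hfp.const_mul _) (hfg.const_mul _), integral_const_mul,
            integral_const_mul]
          ring
  have := discrim_le_zero hquad
  rw [discrim] at this
  nlinarith

end WeightedCauchySchwarz

section GaussianDensity

lemma gaussianDensity_eq_gaussianPDFReal (σ : ℝ) :
    gaussianDensity σ = gaussianPDFReal 0 (σ ^ 2).toNNReal := by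
  ext x
  rw [gaussianDensity, gaussianPDFReal_def, Real.coe_toNNReal _ (sq_nonneg σ), neg_div,
    Real.rpow_neg (by positivity), ← sqrt_eq_rpow]
  simp

lemma gaussianDensity_pos {σ : ℝ} (hσ : σ ≠ 0) (x : ℝ) : 0 < gaussianDensity σ x := by
  unfold gaussianDensity
  positivity

lemma gaussianDensity_sqrt_one_div_pos {a : ℝ} (ha : 0 < a) (x : ℝ) :
    0 < gaussianDensity √(1 / a) x :=
  gaussianDensity_pos (by positivity) x

lemma hasDerivAt_gaussianDensity (σ x : ℝ) :
    HasDerivAt (gaussianDensity σ) (-(x / σ ^ 2) * gaussianDensity σ x) x := by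
  have := ((((hasDerivAt_pow 2 x).fun_neg).div_const (2 * σ ^ 2)).exp).const_mul
    ((2 * π * σ ^ 2) ^ (-(1 : ℝ) / 2))
  refine (this.congr_deriv ?_).congr_of_eventuallyEq (.of_forall fun y ↦ ?_)
  · rcases eq_or_ne σ 0 with rfl | hσ
    · simp
    · simp only [gaussianDensity]; field_simp; ring
  · simp [gaussianDensity]

lemma integrable_sq_mul_gaussianPDFReal (v : ℝ≥0) :
    Integrable fun x ↦ x ^ 2 * gaussianPDFReal 0 v x := by
  rcases eq_or_ne v 0 with rfl | hv
  · simp [gaussianPDFReal_zero_var]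
  have := (memLp_id_gaussianReal (μ := 0) (v := v) 2).integrable_sq
  rw [gaussianReal_of_var_ne_zero _ hv, integrable_withDensity_iff_integrable_smul'
    (measurable_gaussianPDF _ _) (ae_of_all _ fun _ ↦ gaussianPDF_lt_top)] at this
  simpa [toReal_gaussianPDF, mul_comm] using this

lemma integral_sq_mul_gaussianPDFReal (v : ℝ≥0) :
    ∫ x, x ^ 2 * gaussianPDFReal 0 v x = v := by
  rcases eq_or_ne v 0 with rfl | hv
  · simp [gaussianPDFReal_zero_var]
  calc ∫ x, x ^ 2 * gaussianPDFReal 0 v x = ∫ x, x ^ 2 ∂gaussianReal 0 v := by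
        simp_rw [integral_gaussianReal_eq_integral_smul hv, smul_eq_mul, mul_comm]
    _ = Var[fun x ↦ x; gaussianReal 0 v] := by
        simp [variance_eq_integral measurable_id'.aemeasurable, integral_id_gaussianReal]
    _ = v := variance_fun_id_gaussianReal

variable {ι : Type*} [Fintype ι]

lemma integrable_sq_mul_gaussianDensity (σ : ℝ) :
    Integrable fun x ↦ x ^ 2 * gaussianDensity σ x := by
  simpa [gaussianDensity_eq_gaussianPDFReal] using integrable_sq_mul_gaussianPDFReal _

lemma integral_sq_mul_gaussianDensity (σ : ℝ) :
    ∫ x, x ^ 2 * gaussianDensity σ x = σ ^ 2 := by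
  simp [gaussianDensity_eq_gaussianPDFReal, integral_sq_mul_gaussianPDFReal, sq_nonneg]

lemma integrable_sq_mul_sum_gaussianDensity (c σ : ι → ℝ) :
    Integrable fun x ↦ x ^ 2 * ∑ i, c i * gaussianDensity (σ i) x := by
  simp_rw [Finset.mul_sum, mul_left_comm _ (c _)]
  exact integrable_finsetSum _ fun i _ ↦ (integrable_sq_mul_gaussianDensity _).const_mul _

lemma integral_sq_mul_sum_gaussianDensity (c σ : ι → ℝ) :
    ∫ x, x ^ 2 * ∑ i, c i * gaussianDensity (σ i) x = ∑ i, c i * σ i ^ 2 := by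
  simp_rw [Finset.mul_sum, mul_left_comm _ (c _)]
  rw [integral_finsetSum _ fun i _ ↦ (integrable_sq_mul_gaussianDensity _).const_mul _]
  simp [integral_const_mul, integral_sq_mul_gaussianDensity]

end GaussianDensity

noncomputable def fisherInformation (p : ℝ → ℝ) : ℝ := ∫ x, deriv p x ^ 2 / p x

section GaussianMixture

variable {ι : Type*} [Fintype ι] {w a : ι → ℝ}

noncomputable def gaussianMixture (w a : ι → ℝ) (x : ℝ) : ℝ :=
  ∑ i, w i * gaussianDensity √(1 / a i) x

lemma hasDerivAt_gaussianMixture (ha : ∀ i, 0 ≤ a i) (x : ℝ) :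
    HasDerivAt (gaussianMixture w a)
      (-x * ∑ i, w i * a i * gaussianDensity √(1 / a i) x) x := by
  have := HasDerivAt.fun_sum (u := Finset.univ) fun i _ ↦
    (hasDerivAt_gaussianDensity √(1 / a i) x).const_mul (w i)
  refine this.congr_deriv ?_
  rw [Finset.mul_sum]
  refine Finset.sum_congr rfl fun i _ ↦ ?_
  rw [sq_sqrt (one_div_nonneg.2 (ha i)), one_div, div_inv_eq_mul]
  ring

lemma gaussianMixture_pos (hw : ∀ i, 0 ≤ w i) (hws : ∑ i, w i = 1) (ha : ∀ i, 0 < a i)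
    (x : ℝ) : 0 < gaussianMixture w a x := by
  obtain ⟨i, -, hi⟩ : ∃ i ∈ Finset.univ, (0 : ℝ) < w i :=
    Finset.exists_lt_of_sum_lt (by simp [hws])
  exact Finset.sum_pos' (fun i _ ↦ mul_nonneg (hw i) (gaussianDensity_sqrt_one_div_pos (ha i) x).le)
    ⟨i, Finset.mem_univ i, mul_pos hi (gaussianDensity_sqrt_one_div_pos (ha i) x)⟩

lemma integral_sq_mul_gaussianMixture (ha : ∀ i, 0 ≤ a i) :
    ∫ x, x ^ 2 * gaussianMixture w a x = ∑ i, w i / a i := by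
  simp_rw [gaussianMixture, integral_sq_mul_sum_gaussianDensity,
    sq_sqrt (one_div_nonneg.2 (ha _)), mul_one_div]

lemma integral_mul_deriv_gaussianMixture (ha : ∀ i, 0 < a i) :
    ∫ x, x * deriv (gaussianMixture w a) x = -∑ i, w i := by
  simp_rw [(hasDerivAt_gaussianMixture (fun i ↦ (ha i).le) _).deriv, ← mul_assoc, mul_neg,
    ← sq, neg_mul, integral_neg, integral_sq_mul_sum_gaussianDensity,
    sq_sqrt (one_div_nonneg.2 (ha _).le)]
  simp [(ha _).ne']

lemma integrable_mul_deriv_gaussianMixture (ha : ∀ i, 0 ≤ a i) :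
    Integrable fun x ↦ x * deriv (gaussianMixture w a) x := by
  simp_rw [(hasDerivAt_gaussianMixture ha _).deriv, ← mul_assoc, mul_neg, ← sq, neg_mul]
  exact (integrable_sq_mul_sum_gaussianDensity _ _).neg

lemma sq_deriv_div_gaussianMixture_le (hw : ∀ i, 0 ≤ w i) (hws : ∑ i, w i = 1)
    (ha : ∀ i, 0 < a i) (x : ℝ) :
    deriv (gaussianMixture w a) x ^ 2 / gaussianMixture w a x ≤
      x ^ 2 * ∑ i, w i * a i ^ 2 * gaussianDensity √(1 / a i) x := by
  have hcs : (∑ i, w i * a i * gaussianDensity √(1 / a i) x) ^ 2 ≤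
      gaussianMixture w a x * ∑ i, w i * a i ^ 2 * gaussianDensity √(1 / a i) x :=
    Finset.sum_sq_le_sum_mul_sum_of_sq_le_mul _
      (fun i _ ↦ mul_nonneg (hw i) (gaussianDensity_sqrt_one_div_pos (ha i) x).le)
      (fun i _ ↦ mul_nonneg (mul_nonneg (hw i) (sq_nonneg _))
        (gaussianDensity_sqrt_one_div_pos (ha i) x).le)
      (fun i _ ↦ le_of_eq (by ring))
  rw [(hasDerivAt_gaussianMixture (fun i ↦ (ha i).le) x).deriv,
    div_le_iff₀ (gaussianMixture_pos hw hws ha x), mul_pow, neg_sq, mul_assoc,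
    mul_comm _ (gaussianMixture w a x)]
  exact mul_le_mul_of_nonneg_left hcs (sq_nonneg x)

lemma integrable_sq_deriv_div_gaussianMixture (hw : ∀ i, 0 ≤ w i) (hws : ∑ i, w i = 1)
    (ha : ∀ i, 0 < a i) :
    Integrable fun x ↦ deriv (gaussianMixture w a) x ^ 2 / gaussianMixture w a x := by
  have hcont : Continuous (gaussianMixture w a) := continuous_iff_continuousAt.2 fun x ↦
    (hasDerivAt_gaussianMixture (fun i ↦ (ha i).le) x).continuousAt
  refine (integrable_sq_mul_sum_gaussianDensity (fun i ↦ w i * a i ^ 2) fun i ↦ √(1 / a i)).mono'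
    (((measurable_deriv _).pow_const 2).div hcont.measurable).aestronglyMeasurable
    (.of_forall fun x ↦ ?_)
  rw [Real.norm_of_nonneg (div_nonneg (sq_nonneg _) (gaussianMixture_pos hw hws ha x).le)]
  exact sq_deriv_div_gaussianMixture_le hw hws ha x

lemma fisherInformation_gaussianMixture_le (hw : ∀ i, 0 ≤ w i) (hws : ∑ i, w i = 1)
    (ha : ∀ i, 0 < a i) : fisherInformation (gaussianMixture w a) ≤ ∑ i, w i * a i := by
  calc fisherInformation (gaussianMixture w a)
      ≤ ∫ x, x ^ 2 * ∑ i, w i * a i ^ 2 * gaussianDensity √(1 / a i) x :=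
        integral_mono (integrable_sq_deriv_div_gaussianMixture hw hws ha)
          (integrable_sq_mul_sum_gaussianDensity _ _) (sq_deriv_div_gaussianMixture_le hw hws ha)
    _ = ∑ i, w i * a i := by
        rw [integral_sq_mul_sum_gaussianDensity]
        refine Finset.sum_congr rfl fun i _ ↦ ?_
        rw [sq_sqrt (one_div_nonneg.2 (ha i).le)]
        field_simp [(ha i).ne']

lemma inv_le_fisherInformation_gaussianMixture (hw : ∀ i, 0 ≤ w i) (hws : ∑ i, w i = 1)
    (ha : ∀ i, 0 < a i) : (∑ i, w i / a i)⁻¹ ≤ fisherInformation (gaussianMixture w a) := by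
  have hcr := sq_integral_mul_le_integral_sq_mul_mul_integral_sq_div
    (gaussianMixture_pos hw hws ha) (integrable_sq_mul_sum_gaussianDensity _ _)
    (integrable_mul_deriv_gaussianMixture fun i ↦ (ha i).le)
    (integrable_sq_deriv_div_gaussianMixture hw hws ha)
  rw [← fisherInformation, integral_mul_deriv_gaussianMixture ha, hws,
    integral_sq_mul_gaussianMixture fun i ↦ (ha i).le, neg_one_sq] at hcr
  have hA : 0 < ∑ i, w i / a i := by
    refine (Finset.sum_nonneg fun i _ ↦ div_nonneg (hw i) (ha i).le).lt_of_ne fun h ↦ ?_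
    rw [← h, zero_mul] at hcr
    exact absurd hcr (by norm_num)
  exact (inv_le_iff_one_le_mul₀' hA).2 hcr

end GaussianMixture

lemma informationalMean_eq_fisherInformation (n : ℕ) (w a : Fin n → ℝ) :
    informationalMean n w a = fisherInformation (gaussianMixture w a) :=
  rfl

theorem informationalMean_between_harmonic_arithmetic_general (n : ℕ) (w a : Fin n → ℝ)
    (hw : ∀ i, 0 ≤ w i) (hws : ∑ i, w i = 1) (ha : ∀ i, 0 < a i) :
    (∑ i, w i / a i)⁻¹ ≤ informationalMean n w a ∧
      informationalMean n w a ≤ ∑ i, w i * a i := by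
  rw [informationalMean_eq_fisherInformation]
  exact ⟨inv_le_fisherInformation_gaussianMixture hw hws ha,
    fisherInformation_gaussianMixture_le hw hws ha⟩

/-- The informational mean lies between the weighted harmonic and arithmetic means. -/
theorem informationalMean_between_harmonic_arithmetic (n : ℕ) (hn : 1 ≤ n) (w a : Fin n → ℝ)
    (hw : ∀ i, 0 ≤ w i) (hws : ∑ i, w i = 1) (ha : ∀ i, 0 < a i) :
    (∑ i, w i / a i)⁻¹ ≤ informationalMean n w a ∧
      informationalMean n w a ≤ ∑ i, w i * a i :=
  informationalMean_between_harmonic_arithmetic_general n w a hw hws ha
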